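/- Let 𝔥 be a Hoffman graph, let V_s(𝔥) = V₁ ∪ V₂ be a partition of its slim vertices into two nonempty parts, and set 𝔥ⁱ = ⟨V_i⟩_𝔥 for i = 1, 2. Then 𝔥 = 𝔥¹ ⊎ 𝔥² if and only if there are no edges of the special graph S(𝔥) connecting V₁ and V₂. In particular, 𝔥 is indecomposable if and only if S(𝔥) is connected. -/

import Mathlib

attribute [local instance] Classical.propDecidable

open scoped RealInnerProductSpace

/-- A Hoffman graph: a graph together with a labeling of its vertices as fat or slim,
such that every fat vertex has a slim neighbor and fat vertices are pairwise nonadjacent. -/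
structure HoffmanGraph (V : Type*) where
  graph : SimpleGraph V
  IsFat : V → Prop
  fat_not_adj : ∀ {x y : V}, IsFat x → IsFat y → ¬ graph.Adj x y
  fat_slim_nbr : ∀ {x : V}, IsFat x → ∃ y : V, ¬ IsFat y ∧ graph.Adj x y

namespace HoffmanGraph

variable {V : Type*}

/-- A vertex is slim if it is not fat. -/
def IsSlim (H : HoffmanGraph V) (x : V) : Prop := ¬ H.IsFat x

/-- The type of slim vertices. -/
abbrev Slim (H : HoffmanGraph V) := {v : V // H.IsSlim v}

/-- The number of fat neighbors of a vertex. -/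
noncomputable def fatDeg (H : HoffmanGraph V) (x : V) : ℕ :=
  {f : V | H.IsFat f ∧ H.graph.Adj x f}.ncard

/-- The number of common fat neighbors of two vertices. -/
noncomputable def commonFat (H : HoffmanGraph V) (x y : V) : ℕ :=
  {f : V | H.IsFat f ∧ H.graph.Adj x f ∧ H.graph.Adj y f}.ncard

lemma commonFat_comm (H : HoffmanGraph V) (x y : V) :
    H.commonFat x y = H.commonFat y x := by
  unfold commonFat
  congr 1
  ext f
  simp only [Set.mem_setOf_eq]
  tauto

/-- A Hoffman graph is fat if every slim vertex has a fat neighbor. -/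
def IsFatGraph (H : HoffmanGraph V) : Prop :=
  ∀ x, H.IsSlim x → ∃ f, H.IsFat f ∧ H.graph.Adj x f

/-- A representation of norm `m`. -/
def IsRep (H : HoffmanGraph V) (m : ℝ) {E : Type*} [NormedAddCommGroup E]
    [InnerProductSpace ℝ E] (φ : V → E) : Prop :=
  (∀ x, H.IsSlim x → ⟪φ x, φ x⟫ = m) ∧
  (∀ x, H.IsFat x → ⟪φ x, φ x⟫ = 1) ∧
  (∀ x y, H.graph.Adj x y → ⟪φ x, φ y⟫ = 1) ∧
  (∀ x y, x ≠ y → ¬ H.graph.Adj x y → ⟪φ x, φ y⟫ = 0)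

/-- A reduced representation of norm `m` (only the values on slim vertices matter). -/
def IsReducedRep (H : HoffmanGraph V) (m : ℝ) {E : Type*} [NormedAddCommGroup E]
    [InnerProductSpace ℝ E] (ψ : V → E) : Prop :=
  (∀ x, H.IsSlim x → ⟪ψ x, ψ x⟫ = m - H.fatDeg x) ∧
  (∀ x y, H.IsSlim x → H.IsSlim y → H.graph.Adj x y → ⟪ψ x, ψ y⟫ = 1 - H.commonFat x y) ∧
  (∀ x y, H.IsSlim x → H.IsSlim y → x ≠ y → ¬ H.graph.Adj x y →
    ⟪ψ x, ψ y⟫ = - (H.commonFat x y : ℝ))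

/-- The matrix B(𝔥) = A_s − C Cᵀ, indexed by the slim vertices. -/
noncomputable def matrixB (H : HoffmanGraph V) : Matrix H.Slim H.Slim ℝ :=
  fun x y => (if H.graph.Adj x.1 y.1 then (1 : ℝ) else 0) - (H.commonFat x.1 y.1 : ℝ)

/-- The smallest eigenvalue of a Hoffman graph. -/
noncomputable def lambdaMin (H : HoffmanGraph V) [Fintype V] : ℝ :=
  sInf (spectrum ℝ H.matrixB)

/-- A subset of the vertices induces a Hoffman graph iff every fat vertex of it retains
a slim neighbor inside it. -/
def IsGoodSubset (H : HoffmanGraph V) (S : Set V) : Prop :=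
  ∀ x ∈ S, H.IsFat x → ∃ y ∈ S, ¬ H.IsFat y ∧ H.graph.Adj x y

/-- The induced Hoffman subgraph on a good subset. -/
def induce (H : HoffmanGraph V) (S : Set V) (hS : H.IsGoodSubset S) : HoffmanGraph S where
  graph := H.graph.induce S
  IsFat := fun x => H.IsFat x.1
  fat_not_adj := by
    intro x y hx hy hadj
    exact H.fat_not_adj hx hy hadj
  fat_slim_nbr := by
    rintro ⟨x, hxS⟩ hx
    obtain ⟨y, hyS, hy, hadj⟩ := hS x hxS hx
    exact ⟨⟨y, hyS⟩, hy, hadj⟩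

/-- An (abstract) induced Hoffman subgraph relation between Hoffman graphs. -/
def IsInducedSubgraphOf {V₁ V₂ : Type*} (H₁ : HoffmanGraph V₁) (H₂ : HoffmanGraph V₂) : Prop :=
  ∃ e : V₁ ↪ V₂, (∀ x y, H₂.graph.Adj (e x) (e y) ↔ H₁.graph.Adj x y) ∧
    (∀ x, H₂.IsFat (e x) ↔ H₁.IsFat x)

/-- Isomorphism of Hoffman graphs. -/
def IsIsoTo {V₁ V₂ : Type*} (H₁ : HoffmanGraph V₁) (H₂ : HoffmanGraph V₂) : Prop :=
  ∃ e : V₁ ≃ V₂, (∀ x y, H₂.graph.Adj (e x) (e y) ↔ H₁.graph.Adj x y) ∧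
    (∀ x, H₂.IsFat (e x) ↔ H₁.IsFat x)

/-- `H` is the sum of its induced subgraphs on `W₁` and `W₂`. -/
structure IsSum (H : HoffmanGraph V) (W₁ W₂ : Set V) : Prop where
  nonempty₁ : W₁.Nonempty
  nonempty₂ : W₂.Nonempty
  good₁ : H.IsGoodSubset W₁
  good₂ : H.IsGoodSubset W₂
  union_eq : W₁ ∪ W₂ = Set.univ
  slim_partition : ∀ v, H.IsSlim v → (v ∈ W₁ ↔ v ∉ W₂)
  fat_closed₁ : ∀ x ∈ W₁, H.IsSlim x → ∀ f, H.IsFat f → H.graph.Adj x f → f ∈ W₁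
  fat_closed₂ : ∀ x ∈ W₂, H.IsSlim x → ∀ f, H.IsFat f → H.graph.Adj x f → f ∈ W₂
  common_le : ∀ x ∈ W₁, ∀ y ∈ W₂, H.IsSlim x → H.IsSlim y → H.commonFat x y ≤ 1
  common_iff : ∀ x ∈ W₁, ∀ y ∈ W₂, H.IsSlim x → H.IsSlim y →
    (H.commonFat x y = 1 ↔ H.graph.Adj x y)

/-- `H` is decomposable if it is the sum of two nonempty induced Hoffman subgraphs. -/
def Decomposable (H : HoffmanGraph V) : Prop := ∃ W₁ W₂ : Set V, H.IsSum W₁ W₂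

def Indecomposable (H : HoffmanGraph V) : Prop := ¬ H.Decomposable

/-- `H` is the sum of the family of its induced subgraphs on `W i`. -/
structure IsSumFamily (H : HoffmanGraph V) {n : ℕ} (W : Fin n → Set V) : Prop where
  nonempty : ∀ i, (W i).Nonempty
  good : ∀ i, H.IsGoodSubset (W i)
  union_eq : ⋃ i, W i = Set.univ
  slim_mem_unique : ∀ v, H.IsSlim v → ∃! i, v ∈ W i
  fat_closed : ∀ i, ∀ x ∈ W i, H.IsSlim x → ∀ f, H.IsFat f → H.graph.Adj x f → f ∈ W i
  common_le : ∀ i j, i ≠ j → ∀ x ∈ W i, ∀ y ∈ W j, H.IsSlim x → H.IsSlim y →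
    H.commonFat x y ≤ 1
  common_iff : ∀ i j, i ≠ j → ∀ x ∈ W i, ∀ y ∈ W j, H.IsSlim x → H.IsSlim y →
    (H.commonFat x y = 1 ↔ H.graph.Adj x y)

/-- Attach a new fat vertex (the `none` vertex) adjacent exactly to the slim vertices in `S`. -/
def attachFat (H : HoffmanGraph V) (S : Set V) (hne : S.Nonempty)
    (hslim : ∀ v ∈ S, H.IsSlim v) : HoffmanGraph (Option V) where
  graph := {
    Adj := fun a b =>
      match a, b with
      | none, none => False
      | none, some v => v ∈ S
      | some v, none => v ∈ S
      | some u, some v => H.graph.Adj u v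
    symm := by
      constructor
      rintro (_|u) (_|v) h
      · exact h.elim
      · exact h
      · exact h
      · exact h.symm
    loopless := by
      constructor
      rintro (_|u) h
      · exact h.elim
      · exact H.graph.loopless.irrefl u h }
  IsFat := fun a => match a with | none => True | some v => H.IsFat v
  fat_not_adj := by
    rintro (_|u) (_|v) hu hv h
    · exact h.elim
    · exact (hslim v h) hv
    · exact (hslim u h) hu
    · exact H.fat_not_adj hu hv h
  fat_slim_nbr := by
    rintro (_|u) hu
    · obtain ⟨s, hs⟩ := hne
      exact ⟨some s, hslim s hs, hs⟩
    · obtain ⟨y, hy, hadj⟩ := H.fat_slim_nbr hu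
      exact ⟨some y, hy, hadj⟩

/-- `H` is `μ`-saturated: it has smallest eigenvalue at least `μ` and no fat vertex can be
attached while keeping the smallest eigenvalue at least `μ`. -/
def IsSaturated (H : HoffmanGraph V) [Fintype V] (μ : ℝ) : Prop :=
  μ ≤ H.lambdaMin ∧
  ∀ (S : Set V) (hne : S.Nonempty) (hslim : ∀ v ∈ S, H.IsSlim v),
    ¬ (μ ≤ (H.attachFat S hne hslim).lambdaMin)

/-- The special graph `S⁻(𝔥)`: slim vertices, adjacent when the inner product of their
reduced representations is negative. -/
noncomputable def specialMinus (H : HoffmanGraph V) : SimpleGraph H.Slim where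
  Adj x y := x ≠ y ∧
    ((H.graph.Adj x.1 y.1 ∧ (1 : ℝ) - (H.commonFat x.1 y.1 : ℝ) < 0) ∨
     (¬ H.graph.Adj x.1 y.1 ∧ -(H.commonFat x.1 y.1 : ℝ) < 0))
  symm := by
    constructor
    rintro x y ⟨hne, h⟩
    refine ⟨hne.symm, ?_⟩
    rw [H.commonFat_comm y.1 x.1]
    rcases h with ⟨ha, hl⟩ | ⟨ha, hl⟩
    · exact Or.inl ⟨ha.symm, hl⟩
    · exact Or.inr ⟨fun hadj => ha hadj.symm, hl⟩
  loopless := ⟨fun x h => h.1 rfl⟩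

/-- The special graph `S⁺(𝔥)`: slim vertices, adjacent when the inner product of their
reduced representations is positive. -/
noncomputable def specialPlus (H : HoffmanGraph V) : SimpleGraph H.Slim where
  Adj x y := x ≠ y ∧
    ((H.graph.Adj x.1 y.1 ∧ 0 < (1 : ℝ) - (H.commonFat x.1 y.1 : ℝ)) ∨
     (¬ H.graph.Adj x.1 y.1 ∧ 0 < -(H.commonFat x.1 y.1 : ℝ)))
  symm := by
    constructor
    rintro x y ⟨hne, h⟩
    refine ⟨hne.symm, ?_⟩
    rw [H.commonFat_comm y.1 x.1]
    rcases h with ⟨ha, hl⟩ | ⟨ha, hl⟩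
    · exact Or.inl ⟨ha.symm, hl⟩
    · exact Or.inr ⟨fun hadj => ha hadj.symm, hl⟩
  loopless := ⟨fun x h => h.1 rfl⟩

/-- The special graph `S(𝔥)`, the union of `S⁻(𝔥)` and `S⁺(𝔥)`. -/
noncomputable def special (H : HoffmanGraph V) : SimpleGraph H.Slim :=
  H.specialMinus ⊔ H.specialPlus

/-- `⟨S⟩_𝔥`: the set `S` together with all fat neighbors of its members. -/
def closureSet (H : HoffmanGraph V) (S : Set V) : Set V :=
  S ∪ {f | H.IsFat f ∧ ∃ x ∈ S, H.graph.Adj x f}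

/-- The Hoffman graph `𝔥^(t)` with one slim vertex (`none`) and `t` fat vertices. -/
def manyFat (t : ℕ) : HoffmanGraph (Option (Fin t)) where
  graph := {
    Adj := fun a b => (a = none ∧ b ≠ none) ∨ (a ≠ none ∧ b = none)
    symm := by
      constructor
      rintro a b (⟨h1, h2⟩ | ⟨h1, h2⟩)
      · exact Or.inr ⟨h2, h1⟩
      · exact Or.inl ⟨h2, h1⟩
    loopless := by
      constructor
      rintro a (⟨h1, h2⟩ | ⟨h1, h2⟩)
      · exact h2 h1
      · exact h1 h2 }
  IsFat := fun a => a ≠ none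
  fat_not_adj := by
    rintro a b ha hb (⟨h1, _⟩ | ⟨_, h1⟩)
    · exact ha h1
    · exact hb h1
  fat_slim_nbr := by
    intro a ha
    refine ⟨none, by simp, Or.inr ⟨ha, rfl⟩⟩

/-- An ordinary (slim) graph regarded as a Hoffman graph. -/
def ofSimple {W : Type*} (G : SimpleGraph W) : HoffmanGraph W where
  graph := G
  IsFat := fun _ => False
  fat_not_adj := by intro x y hx _ _; exact hx
  fat_slim_nbr := by intro x hx; exact hx.elim

end HoffmanGraph
namespace HoffmanGraph

variable {V : Type*}

/-- The Hoffman graph obtained by replacing the fat vertices `f i` by slim cliques of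
sizes `n i`, joining all neighbors of `f i` to all vertices of the `i`-th clique. -/
def blowup {k : ℕ} (H : HoffmanGraph V) (f : Fin k → V) (hf : ∀ i, H.IsFat (f i))
    (n : Fin k → ℕ) :
    HoffmanGraph ({v : V // v ∉ Set.range f} ⊕ (Σ i : Fin k, Fin (n i))) where
  graph := {
    Adj := fun a b =>
      match a, b with
      | .inl u, .inl v => H.graph.Adj u.1 v.1
      | .inl u, .inr x => H.graph.Adj u.1 (f x.1)
      | .inr x, .inl v => H.graph.Adj (f x.1) v.1
      | .inr x, .inr y => x ≠ y ∧ x.1 = y.1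
    symm := by
      constructor
      rintro (u|x) (v|y) h
      · exact h.symm
      · exact h.symm
      · exact h.symm
      · exact ⟨h.1.symm, h.2.symm⟩
    loopless := by
      constructor
      rintro (u|x) h
      · exact H.graph.loopless.irrefl _ h
      · exact h.1 rfl }
  IsFat := fun a => match a with | .inl u => H.IsFat u.1 | .inr _ => False
  fat_not_adj := by
    rintro (u|x) (v|y) hu hv h
    · exact H.fat_not_adj hu hv h
    · exact hv
    · exact hu
    · exact hu
  fat_slim_nbr := by
    rintro (u|x) hu
    · obtain ⟨y, hy, hadj⟩ := H.fat_slim_nbr hu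
      refine ⟨Sum.inl ⟨y, ?_⟩, hy, hadj⟩
      rintro ⟨i, rfl⟩
      exact hy (hf i)
    · exact hu.elim

/-- The slim graph obtained by replacing every fat vertex by a slim `n`-clique,
joining all neighbors of a fat vertex to all vertices of its clique. -/
def blowupAll (H : HoffmanGraph V) (n : ℕ) :
    HoffmanGraph (H.Slim ⊕ ({f : V // H.IsFat f} × Fin n)) where
  graph := {
    Adj := fun a b =>
      match a, b with
      | .inl u, .inl v => H.graph.Adj u.1 v.1
      | .inl u, .inr x => H.graph.Adj u.1 x.1.1
      | .inr x, .inl v => H.graph.Adj x.1.1 v.1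
      | .inr x, .inr y => x ≠ y ∧ x.1 = y.1
    symm := by
      constructor
      rintro (u|x) (v|y) h
      · exact h.symm
      · exact h.symm
      · exact h.symm
      · exact ⟨h.1.symm, h.2.symm⟩
    loopless := by
      constructor
      rintro (u|x) h
      · exact H.graph.loopless.irrefl _ h
      · exact h.1 rfl }
  IsFat := fun _ => False
  fat_not_adj := by intro x y hx _; exact hx.elim
  fat_slim_nbr := by intro x hx; exact hx.elim

/-- The Hoffman graph of Example 4.2: slim vertices `ℤ/4ℤ` (the `inl`'s), fat vertices
`f_j` for `j ∈ ℤ/4ℤ` (the `inr`'s), with edges `{0,2}`, `{1,3}` and `{i, f_j}` for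
`i = j` or `i = j + 1`. -/
def exampleA3tilde : HoffmanGraph (ZMod 4 ⊕ ZMod 4) where
  graph := {
    Adj := fun a b =>
      match a, b with
      | .inl i, .inl j => j = i + 2
      | .inl i, .inr j => i = j ∨ i = j + 1
      | .inr j, .inl i => i = j ∨ i = j + 1
      | .inr _, .inr _ => False
    symm := by
      constructor
      have h4 : (2 : ZMod 4) + 2 = 0 := by decide
      rintro (i|i) (j|j) h
      · have h' : j = i + 2 := h
        subst h'
        show i = i + 2 + 2
        rw [add_assoc, h4, add_zero]
      · exact h
      · exact h
      · exact h.elim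
    loopless := by
      constructor
      rintro (i|i) h
      · exact absurd (left_eq_add.mp h) (by decide)
      · exact h }
  IsFat := fun a => match a with | .inl _ => False | .inr _ => True
  fat_not_adj := by
    rintro (i|i) (j|j) hx hy h
    · exact hx
    · exact hx
    · exact hy
    · exact h
  fat_slim_nbr := by
    rintro (i|i) hx
    · exact hx.elim
    · exact ⟨Sum.inl i, id, Or.inl rfl⟩

end HoffmanGraph

/-- The extended Dynkin graph `D̃₄`, i.e. the star `K_{1,4}`. -/
def tildeD4Graph : SimpleGraph (Fin 5) := SimpleGraph.fromRel (fun a _ => a = 0)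

/-- The Dynkin graph `A_m`: the path on `m` vertices. -/
def dynkinA (m : ℕ) : SimpleGraph (Fin m) :=
  SimpleGraph.fromRel (fun i j => i.1 + 1 = j.1)

/-- The extended Dynkin graph `Ã_m`: the cycle on `m + 1` vertices. -/
def tildeA (m : ℕ) : SimpleGraph (ZMod (m + 1)) :=
  SimpleGraph.fromRel (fun i j => i + 1 = j)

/-- The Dynkin graph `D_m`: the path `1 - 2 - ⋯ - (m-1)` with the extra vertex `0`
attached to the vertex `2`. -/
def dynkinD (m : ℕ) : SimpleGraph (Fin m) :=
  SimpleGraph.fromRel (fun i j => (1 ≤ i.1 ∧ i.1 + 1 = j.1) ∨ (i.1 = 0 ∧ j.1 = 2))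

/-- The extended Dynkin graph `D̃_m` on `m + 1` vertices: the path `1 - 2 - ⋯ - (m-1)`
with the extra vertex `0` attached to `2` and the extra vertex `m` attached to `m - 2`. -/
def tildeD (m : ℕ) : SimpleGraph (Fin (m + 1)) :=
  SimpleGraph.fromRel (fun i j =>
    (1 ≤ i.1 ∧ i.1 + 1 = j.1 ∧ j.1 ≤ m - 1) ∨ (i.1 = 0 ∧ j.1 = 2) ∨ (i.1 = m ∧ j.1 = m - 2))

/-! For distinct slim `x`, `y` the entry `B(x, y) = [x ∼ y] - |N^f(x, y)|` is the inner product
of their reduced representations, so `x y` is an edge of `S(𝔥)` iff `B(x, y) ≠ 0`. And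
`B(x, y) = 0` says precisely that `x` and `y` have at most one common fat neighbor, and exactly
one iff they are adjacent: condition (iv) of a sum. The remaining conditions hold for the
closures of any partition of the slim vertices, so sum decompositions of `𝔥` are the same as
cuts of `S(𝔥)` crossed by no edge, i.e. disconnections of `S(𝔥)`. -/

theorem SimpleGraph.not_preconnected_iff_exists_cut {α : Type*} (G : SimpleGraph α) :
    ¬ G.Preconnected ↔
      ∃ S : Set α, S.Nonempty ∧ Sᶜ.Nonempty ∧ ∀ x ∈ S, ∀ y ∉ S, ¬ G.Adj x y := by
  constructor
  · intro h
    obtain ⟨u, v, huv⟩ : ∃ u v, ¬ G.Reachable u v := by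
      simpa [SimpleGraph.Preconnected] using h
    exact ⟨{w | G.Reachable u w}, ⟨u, .rfl⟩, ⟨v, huv⟩,
      fun x hx y hy hxy => hy (hx.trans hxy.reachable)⟩
  · rintro ⟨S, ⟨u, hu⟩, ⟨v, hv⟩, hcut⟩ hG
    obtain ⟨p⟩ := hG u v
    obtain ⟨d, -, hd₁, hd₂⟩ := p.exists_boundary_dart S hu hv
    exact hcut _ hd₁ _ hd₂ d.adj

namespace HoffmanGraph

variable {V : Type*} {H : HoffmanGraph V}

theorem special_adj_iff {x y : H.Slim} : H.special.Adj x y ↔ x ≠ y ∧ H.matrixB x y ≠ 0 := by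
  simp only [special, SimpleGraph.sup_adj, specialMinus, specialPlus, matrixB]
  by_cases h : H.graph.Adj x.1 y.1 <;> simp [h, ← and_or_left, ne_iff_lt_or_gt]

theorem matrixB_eq_zero_iff (x y : H.Slim) :
    H.matrixB x y = 0 ↔
      H.commonFat x.1 y.1 ≤ 1 ∧ (H.commonFat x.1 y.1 = 1 ↔ H.graph.Adj x.1 y.1) := by
  unfold matrixB
  split_ifs with h
  · rw [sub_eq_zero, eq_comm, Nat.cast_eq_one, iff_true_intro h, iff_true]
    omega
  · rw [zero_sub, neg_eq_zero, Nat.cast_eq_zero, iff_false_intro h, iff_false]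
    omega

theorem IsSum.not_special_adj {W₁ W₂ : Set V} (hs : H.IsSum W₁ W₂) {x y : H.Slim}
    (hx : x.1 ∈ W₁) (hy : y.1 ∈ W₂) : ¬ H.special.Adj x y := by
  simp only [special_adj_iff, ne_eq, matrixB_eq_zero_iff]
  exact fun h => h.2 ⟨hs.common_le _ hx _ hy x.2 y.2, hs.common_iff _ hx _ hy x.2 y.2⟩

theorem IsGoodSubset.exists_isSlim {W : Set V} (hW : H.IsGoodSubset W) (hne : W.Nonempty) :
    ∃ x ∈ W, H.IsSlim x := by
  obtain ⟨w, hw⟩ := hne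
  by_cases hf : H.IsFat w
  · obtain ⟨y, hy, hys, -⟩ := hW w hw hf
    exact ⟨y, hy, hys⟩
  · exact ⟨w, hw, hf⟩

section closureSet

variable {S : Set V}

theorem subset_closureSet : S ⊆ H.closureSet S := Set.subset_union_left

theorem mem_of_mem_closureSet {x : V} (hx : x ∈ H.closureSet S) (hslim : H.IsSlim x) :
    x ∈ S :=
  hx.resolve_right fun hf => hslim hf.1

theorem fat_mem_closureSet {x f : V} (hx : x ∈ H.closureSet S) (hslim : H.IsSlim x)
    (hf : H.IsFat f) (hadj : H.graph.Adj x f) : f ∈ H.closureSet S :=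
  Or.inr ⟨hf, x, mem_of_mem_closureSet hx hslim, hadj⟩

theorem isGoodSubset_closureSet (hS : ∀ v ∈ S, H.IsSlim v) :
    H.IsGoodSubset (H.closureSet S) := by
  rintro x (hx | ⟨-, y, hy, hxy⟩) hf
  · exact absurd hf (hS x hx)
  · exact ⟨y, subset_closureSet hy, hS y hy, hxy.symm⟩

theorem closureSet_union_closureSet {V₁ V₂ : Set V}
    (hcover : V₁ ∪ V₂ = {v | H.IsSlim v}) :
    H.closureSet V₁ ∪ H.closureSet V₂ = Set.univ := by
  refine Set.eq_univ_of_forall fun v => ?_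
  by_cases hf : H.IsFat v
  · obtain ⟨y, hy, hvy⟩ := H.fat_slim_nbr hf
    rcases (hcover.symm ▸ hy : y ∈ V₁ ∪ V₂) with hy | hy
    · exact Or.inl (Or.inr ⟨hf, y, hy, hvy.symm⟩)
    · exact Or.inr (Or.inr ⟨hf, y, hy, hvy.symm⟩)
  · rcases (hcover.symm ▸ hf : v ∈ V₁ ∪ V₂) with hv | hv
    · exact Or.inl (subset_closureSet hv)
    · exact Or.inr (subset_closureSet hv)

end closureSet

theorem isSum_closureSet_of_no_special_edges {V₁ V₂ : Set V} (h1 : V₁.Nonempty)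
    (h2 : V₂.Nonempty) (hdisj : Disjoint V₁ V₂) (hcover : V₁ ∪ V₂ = {v | H.IsSlim v})
    (hno : ∀ x y : H.Slim, x.1 ∈ V₁ → y.1 ∈ V₂ → ¬ H.special.Adj x y) :
    H.IsSum (H.closureSet V₁) (H.closureSet V₂) := by
  have hslim₁ : ∀ v ∈ V₁, H.IsSlim v := fun v hv => (hcover.subset (Or.inl hv) :)
  have hslim₂ : ∀ v ∈ V₂, H.IsSlim v := fun v hv => (hcover.subset (Or.inr hv) :)
  have hcross : ∀ x ∈ H.closureSet V₁, ∀ y ∈ H.closureSet V₂, ∀ (hx : H.IsSlim x)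
      (hy : H.IsSlim y), H.commonFat x y ≤ 1 ∧ (H.commonFat x y = 1 ↔ H.graph.Adj x y) := by
    intro x hx y hy hxs hys
    have hx₁ := mem_of_mem_closureSet hx hxs
    have hy₂ := mem_of_mem_closureSet hy hys
    have hne : (⟨x, hxs⟩ : H.Slim) ≠ ⟨y, hys⟩ :=
      Subtype.coe_ne_coe.mp (hdisj.ne_of_mem hx₁ hy₂)
    simpa only [special_adj_iff, ne_eq, matrixB_eq_zero_iff, hne, not_false_eq_true, true_and,
      not_not] using hno ⟨x, hxs⟩ ⟨y, hys⟩ hx₁ hy₂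
  refine
    { nonempty₁ := h1.mono subset_closureSet
      nonempty₂ := h2.mono subset_closureSet
      good₁ := isGoodSubset_closureSet hslim₁
      good₂ := isGoodSubset_closureSet hslim₂
      union_eq := closureSet_union_closureSet hcover
      slim_partition := fun v hv => ⟨fun hv₁ hv₂ => ?_, fun hv₂ => ?_⟩
      fat_closed₁ := fun x hx hxs f hf hxf => fat_mem_closureSet hx hxs hf hxf
      fat_closed₂ := fun x hx hxs f hf hxf => fat_mem_closureSet hx hxs hf hxf
      common_le := fun x hx y hy hxs hys => (hcross x hx y hy hxs hys).1
      common_iff := fun x hx y hy hxs hys => (hcross x hx y hy hxs hys).2 }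
  · exact Set.disjoint_left.mp hdisj (mem_of_mem_closureSet hv₁ hv)
      (mem_of_mem_closureSet hv₂ hv)
  · rcases (hcover.symm ▸ hv : v ∈ V₁ ∪ V₂) with h | h
    · exact subset_closureSet h
    · exact absurd (subset_closureSet h) hv₂

theorem decomposable_iff_not_preconnected_special (H : HoffmanGraph V) :
    H.Decomposable ↔ ¬ H.special.Preconnected := by
  rw [SimpleGraph.not_preconnected_iff_exists_cut]
  constructor
  · rintro ⟨W₁, W₂, hs⟩
    obtain ⟨x, hx, hxs⟩ := hs.good₁.exists_isSlim hs.nonempty₁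
    obtain ⟨y, hy, hys⟩ := hs.good₂.exists_isSlim hs.nonempty₂
    have mem₂ : ∀ v ∉ W₁, v ∈ W₂ := fun v hv =>
      ((hs.union_eq.symm ▸ Set.mem_univ v : v ∈ W₁ ∪ W₂)).resolve_left hv
    exact ⟨{z | z.1 ∈ W₁}, ⟨⟨x, hxs⟩, hx⟩,
      ⟨⟨y, hys⟩, fun h => (hs.slim_partition y hys).mp h hy⟩,
      fun u hu v hv => hs.not_special_adj hu (mem₂ v hv)⟩
  · rintro ⟨S, hS, hSc, hcut⟩
    refine ⟨_, _, isSum_closureSet_of_no_special_edges (hS.image _) (hSc.image _)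
      ((Set.disjoint_image_iff Subtype.val_injective).mpr disjoint_compl_right) ?_ ?_⟩
    · rw [← Set.image_union, Set.union_compl_self, Set.image_univ, Subtype.range_coe_subtype]
    · intro x y hx hy
      exact hcut x (Subtype.val_injective.mem_set_image.mp hx) y
        (Subtype.val_injective.mem_set_image.mp hy)

end HoffmanGraph

theorem isSum_iff_no_special_edges_general {V : Type}
    (H : HoffmanGraph V) (V₁ V₂ : Set V) (h1 : V₁.Nonempty) (h2 : V₂.Nonempty)
    (hdisj : Disjoint V₁ V₂) (hcover : V₁ ∪ V₂ = {v | H.IsSlim v}) :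
    (H.IsSum (H.closureSet V₁) (H.closureSet V₂) ↔
      ∀ x y : H.Slim, x.1 ∈ V₁ → y.1 ∈ V₂ → ¬ H.special.Adj x y) ∧
    (H.Indecomposable ↔ H.special.Connected) := by
  obtain ⟨v, hv⟩ := h1
  have hslim : Nonempty H.Slim := ⟨⟨v, hcover.subset (Or.inl hv)⟩⟩
  refine ⟨⟨fun hs x y hx hy => ?_,
    HoffmanGraph.isSum_closureSet_of_no_special_edges ⟨v, hv⟩ h2 hdisj hcover⟩, ?_⟩
  · exact hs.not_special_adj (HoffmanGraph.subset_closureSet hx)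
      (HoffmanGraph.subset_closureSet hy)
  · rw [HoffmanGraph.Indecomposable, H.decomposable_iff_not_preconnected_special, not_not,
      SimpleGraph.connected_iff, and_iff_left hslim]

/-- Lemma 3.4: for a partition `V_s(𝔥) = V₁ ∪ V₂` of the slim vertices,
`𝔥 = ⟨V₁⟩_𝔥 ⊎ ⟨V₂⟩_𝔥` iff there are no edges of the special graph `S(𝔥)` between `V₁`
and `V₂`; in particular `𝔥` is indecomposable iff `S(𝔥)` is connected. -/
theorem isSum_iff_no_special_edges {V : Type} [Fintype V] [Nonempty V]
    (H : HoffmanGraph V) (V₁ V₂ : Set V) (h1 : V₁.Nonempty) (h2 : V₂.Nonempty)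
    (hdisj : Disjoint V₁ V₂) (hcover : V₁ ∪ V₂ = {v | H.IsSlim v}) :
    (H.IsSum (H.closureSet V₁) (H.closureSet V₂) ↔
      ∀ x y : H.Slim, x.1 ∈ V₁ → y.1 ∈ V₂ → ¬ H.special.Adj x y) ∧
    (H.Indecomposable ↔ H.special.Connected) :=
  isSum_iff_no_special_edges_general H V₁ V₂ h1 h2 hdisj hcover
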